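/- Let G be a transitive subgroup of S_d (d ≥ 5) containing a (d−1)-cycle σ and an element τ whose cycle decomposition consists of a 2-cycle and a (d−3)-cycle with d−3 odd. Then some power of τ is a transposition, and consequently G = S_d. -/

import Mathlib

/-!
The power `τ ^ (d - 3)` kills the odd cycle of `τ` and leaves its transposition. Since `σ` fixes
exactly one point and cycles the others, transitivity of `G` upgrades to 2-transitivity; a
2-transitive group is primitive, and by Jordan's theorem a primitive permutation group containing
a transposition is the full symmetric group.
-/

open Equiv Equiv.Perm Finset MulAction

namespace Equiv.Perm

variable {α : Type*} [Fintype α] [DecidableEq α]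

theorem isSwap_pow_of_cycleType_eq_pair {τ : Perm α} {m : ℕ} (hm : Odd m)
    (hτ : τ.cycleType = {2, m}) : (τ ^ m).IsSwap := by
  obtain ⟨c, ρ, rfl, hdisj, hc, hc2⟩ := mem_cycleType_iff.mp (by simp [hτ] : 2 ∈ τ.cycleType)
  have hρ : ρ.cycleType = {m} := by
    rw [hdisj.cycleType_mul, hc.cycleType, hc2, Multiset.insert_eq_cons,
      ← Multiset.singleton_add] at hτ
    exact add_left_cancel hτ
  have hρm : ρ ^ m = 1 := by
    rw [← orderOf_dvd_iff_pow_eq_one, ← lcm_cycleType, hρ, Multiset.lcm_singleton,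
      normalize_eq]
  have hcm : c ^ m = c := by
    rw [← pow_mod_orderOf, hc.orderOf, hc2, Nat.odd_iff.mp hm, pow_one]
  rw [hdisj.commute.mul_pow, hρm, mul_one, hcm]
  exact card_support_eq_two.mp hc2

/-- To send `a, b` to `c, d`, move `a` and `c` to the fixed point `x` of `σ`; a power of `σ`
then fixes `x` and carries the image of `b` to the one of `d`. -/
theorem isMultiplyPretransitive_two_of_isCycle_mem {G : Subgroup (Perm α)}
    [IsPretransitive G α] {σ : Perm α} (hσG : σ ∈ G) (hσ : σ.IsCycle)
    (hσcard : #σ.support = Fintype.card α - 1) : IsMultiplyPretransitive G α 2 := by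
  obtain ⟨x, hx⟩ : ∃ x, σ.supportᶜ = {x} := card_eq_one.mp <| by
    have := hσ.two_le_card_support
    rw [card_compl, hσcard]
    omega
  have hsupp : ∀ y, σ y ≠ y ↔ y ≠ x := fun y => by
    simpa using (Finset.ext_iff.mp hx y).not
  rw [is_two_pretransitive_iff]
  intro a b c d hab hcd
  obtain ⟨g, hg⟩ := exists_smul_eq G a x
  obtain ⟨h, hh⟩ := exists_smul_eq G c x
  obtain ⟨k, hk⟩ := hσ.exists_pow_eq
    ((hsupp _).mpr fun h' => hab (smul_left_cancel g (hg.trans h'.symm)))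
    ((hsupp _).mpr fun h' => hcd (smul_left_cancel h (hh.trans h'.symm)))
  have hσx : σ x = x := by simpa using (hsupp x).not
  refine ⟨h⁻¹ * ⟨σ, hσG⟩ ^ k * g, ?_, ?_⟩
  · rw [mul_smul, mul_smul, hg, inv_smul_eq_iff, hh]
    simpa [Subgroup.smul_def] using pow_apply_eq_self_of_apply_eq_self hσx k
  · rw [mul_smul, mul_smul, inv_smul_eq_iff]
    simpa [Subgroup.smul_def] using hk

end Equiv.Perm

theorem stmt_10_general (d : ℕ) (hodd : Odd (d - 3))
    (G : Subgroup (Equiv.Perm (Fin d)))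
    (htrans : ∀ i j : Fin d, ∃ g ∈ G, g i = j)
    (σ : Equiv.Perm (Fin d)) (hσG : σ ∈ G) (hσ : σ.IsCycle)
    (hσcard : σ.support.card = d - 1)
    (τ : Equiv.Perm (Fin d)) (hτG : τ ∈ G)
    (hτ : τ.cycleType = {2, d - 3}) :
    (∃ k : ℕ, (τ ^ k).IsSwap) ∧ G = ⊤ := by
  have hswap := isSwap_pow_of_cycleType_eq_pair hodd hτ
  have : IsPretransitive G (Fin d) := ⟨fun i j => by
    obtain ⟨g, hg, hgij⟩ := htrans i j
    exact ⟨⟨g, hg⟩, hgij⟩⟩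
  have hG2 := isMultiplyPretransitive_two_of_isCycle_mem hσG hσ (by simpa using hσcard)
  exact ⟨⟨d - 3, hswap⟩, subgroup_eq_top_of_isPreprimitive_of_isSwap_mem
    (isPreprimitive_of_is_two_pretransitive hG2) _ hswap (pow_mem hτG _)⟩

/-- If a transitive subgroup `G ≤ S_d` (`d ≥ 5`) contains a `(d-1)`-cycle `σ`
and an element `τ` whose cycle decomposition is a `2`-cycle together with a
`(d-3)`-cycle, where `d - 3` is odd, then some power of `τ` is a transposition
and `G = S_d`. -/
theorem stmt_10 (d : ℕ) (hd : 5 ≤ d) (hodd : Odd (d - 3))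
    (G : Subgroup (Equiv.Perm (Fin d)))
    (htrans : ∀ i j : Fin d, ∃ g ∈ G, g i = j)
    (σ : Equiv.Perm (Fin d)) (hσG : σ ∈ G) (hσ : σ.IsCycle)
    (hσcard : σ.support.card = d - 1)
    (τ : Equiv.Perm (Fin d)) (hτG : τ ∈ G)
    (hτ : τ.cycleType = {2, d - 3}) :
    (∃ k : ℕ, (τ ^ k).IsSwap) ∧ G = ⊤ :=
  stmt_10_general d hodd G htrans σ hσG hσ hσcard τ hτG hτ
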